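/- Equality-pattern extension: let Δ be a type environment, τ a type, and v₁ a concrete value of type σ₁(τ). If δ₁ ⇌_Δ δ₂ and for every type variable α the size |σ₂(α)| is at least the maximum number of α-occurrences in the extended environment Δ, x:τ, then there exists a concrete value v₂ of type σ₂(τ) such that (δ₁, x ↦ v₁) ⇌_{Δ, x:τ} (δ₂, x ↦ v₂). -/

import Mathlib

/-- Polymorphic types: Unit, Sum, Prod, and type variables. -/
inductive PTy : Type
  | unit : PTy
  | sum : PTy → PTy → PTy
  | prod : PTy → PTy → PTy
  | var : ℕ → PTy
deriving DecidableEq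

/-- Apply a type-variable substitution. -/
def psubst (σ : ℕ → PTy) : PTy → PTy
  | .unit => .unit
  | .sum a b => .sum (psubst σ a) (psubst σ b)
  | .prod a b => .prod (psubst σ a) (psubst σ b)
  | .var n => σ n

/-- Concrete values. -/
inductive Val : Type
  | sole : Val
  | vleft : Val → Val
  | vright : Val → Val
  | vpair : Val → Val → Val
deriving DecidableEq

/-- Typing of concrete values. -/
inductive HasTy : Val → PTy → Prop
  | sole : HasTy .sole .unit
  | vleft {v a b} : HasTy v a → HasTy (.vleft v) (.sum a b)
  | vright {v a b} : HasTy v b → HasTy (.vright v) (.sum a b)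
  | vpair {v w a b} : HasTy v a → HasTy w b → HasTy (.vpair v w) (.prod a b)

/-- A type is monomorphic (contains no type variables). -/
def Mono : PTy → Prop
  | .unit => True
  | .sum a b => Mono a ∧ Mono b
  | .prod a b => Mono a ∧ Mono b
  | .var _ => False

/-- Shells: values with holes at type-variable positions. -/
inductive Shell : Type
  | sole : Shell
  | sleft : Shell → Shell
  | sright : Shell → Shell
  | spair : Shell → Shell → Shell
  | hole : ℕ → Shell
deriving DecidableEq

/-- The shell of a value at a (possibly polymorphic) type. -/
def shell : PTy → Val → Shell
  | .var n, _ => .hole n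
  | .sum a _, .vleft v => .sleft (shell a v)
  | .sum _ b, .vright v => .sright (shell b v)
  | .prod a b, .vpair v w => .spair (shell a v) (shell b w)
  | _, _ => .sole

/-- The ordered list of α-holes of a value at a type. -/
def holes (α : ℕ) : PTy → Val → List Val
  | .var n, v => if n = α then [v] else []
  | .sum a _, .vleft v => holes α a v
  | .sum _ b, .vright v => holes α b v
  | .prod a b, .vpair v w => holes α a v ++ holes α b w
  | _, _ => []

/-- Environment shells: per-variable shells. -/
def envshell (Δ : List PTy) (δ : List Val) : List Shell :=
  List.zipWith shell Δ δ

/-- Environment holes: concatenated α-holes across all variables. -/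
def envholes (α : ℕ) (Δ : List PTy) (δ : List Val) : List Val :=
  (List.zipWith (holes α) Δ δ).flatten

/-- The equality-pattern relation on value environments. -/
def EqPat (Δ : List PTy) (δ₁ δ₂ : List Val) : Prop :=
  envshell Δ δ₁ = envshell Δ δ₂ ∧
  ∀ (α : ℕ) (i j : ℕ) (h₁ k₁ h₂ k₂ : Val),
    (envholes α Δ δ₁)[i]? = some h₁ → (envholes α Δ δ₁)[j]? = some k₁ →
    (envholes α Δ δ₂)[i]? = some h₂ → (envholes α Δ δ₂)[j]? = some k₂ →
    (h₁ = k₁ ↔ h₂ = k₂)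

/-- Well-typedness of a value environment: δ : σ(Δ). -/
def EnvTy (σ : ℕ → PTy) (Δ : List PTy) (δ : List Val) : Prop :=
  List.Forall₂ (fun τ v => HasTy v (psubst σ τ)) Δ δ

/-- Value terms, possibly containing variables (de Bruijn style indices into Δ). -/
inductive Term : Type
  | sole : Term
  | tleft : Term → Term
  | tright : Term → Term
  | tpair : Term → Term → Term
  | var : ℕ → Term
deriving DecidableEq

/-- Denotation of a term under a value environment. -/
def denT : Term → List Val → Val
  | .sole, _ => .sole
  | .tleft t, δ => .vleft (denT t δ)
  | .tright t, δ => .vright (denT t δ)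
  | .tpair s t, δ => .vpair (denT s δ) (denT t δ)
  | .var n, δ => δ.getD n .sole

/-- Typing of terms under a type environment. -/
inductive TmTy : List PTy → Term → PTy → Prop
  | sole {Δ} : TmTy Δ .sole .unit
  | tleft {Δ t a b} : TmTy Δ t a → TmTy Δ (.tleft t) (.sum a b)
  | tright {Δ t a b} : TmTy Δ t b → TmTy Δ (.tright t) (.sum a b)
  | tpair {Δ s t a b} : TmTy Δ s a → TmTy Δ t b → TmTy Δ (.tpair s t) (.prod a b)
  | var {Δ n τ} : Δ[n]? = some τ → TmTy Δ (.var n) τ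

/-- Maximum number of occurrences of type variable α in a type. -/
def cnt (α : ℕ) : PTy → ℕ
  | .unit => 0
  | .sum a b => max (cnt α a) (cnt α b)
  | .prod a b => cnt α a + cnt α b
  | .var n => if n = α then 1 else 0

/-- Maximum number of occurrences of α in a type environment. -/
def cntEnv (α : ℕ) (Δ : List PTy) : ℕ := (Δ.map (cnt α)).sum

/-- Enumeration of the concrete values of a (monomorphic) type. -/
def enum : PTy → List Val
  | .unit => [.sole]
  | .sum a b => (enum a).map .vleft ++ (enum b).map .vright
  | .prod a b => (enum a).flatMap (fun v => (enum b).map (.vpair v))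
  | .var _ => []
/-! The α-holes of `v₁` are at most `cnt α τ` values and those of `δ₁` at most `cntEnv α Δ`,
so `σ₂ α` has room for them all. The pattern `δ₁ ⇌ δ₂` says that the holes of `δ₂` are the
image of those of `δ₁` under a map that is injective on them; extending this map injectively
to the holes of `v₁` (sending new values to fresh elements of `σ₂ α`) and applying it to every
hole of `v₁` produces `v₂`. -/

open Set

section ListPattern

variable {α β : Type*}

/-- The second conjunct of `EqPat Δ δ₁ δ₂` is, definitionally,
`∀ α, SameEqPattern (envholes α Δ δ₁) (envholes α Δ δ₂)`. -/
def SameEqPattern (l₁ : List α) (l₂ : List β) : Prop :=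
  ∀ (i j : ℕ) (h₁ k₁ : α) (h₂ k₂ : β), l₁[i]? = some h₁ → l₁[j]? = some k₁ →
    l₂[i]? = some h₂ → l₂[j]? = some k₂ → (h₁ = k₁ ↔ h₂ = k₂)

theorem sameEqPattern_map {l : List α} {f : α → β} (hf : InjOn f {x | x ∈ l}) :
    SameEqPattern l (l.map f) := by
  intro i j h k h' k' hi hj hi' hj'
  simp only [List.getElem?_map, hi, hj, Option.map_some, Option.some_inj] at hi' hj'
  subst hi' hj'
  exact ⟨congrArg f, fun e => hf (List.mem_of_getElem? hi) (List.mem_of_getElem? hj) e⟩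

theorem SameEqPattern.exists_injOn_map_eq [Nonempty β] {l₁ : List α} {l₂ : List β}
    (hlen : l₁.length = l₂.length) (hpat : SameEqPattern l₁ l₂) :
    ∃ f : α → β, InjOn f {x | x ∈ l₁} ∧ l₂ = l₁.map f := by
  classical
  -- `f x` reads `l₂` at the first position of `x` in `l₁`; the pattern makes every position agree.
  let f : α → β := fun x => l₂.getD (l₁.idxOf x) (Classical.arbitrary β)
  have hf : ∀ i (hi : i < l₁.length), f l₁[i] = l₂[i]'(hlen ▸ hi) := by
    intro i hi
    have hk : l₁.idxOf l₁[i] < l₁.length := List.idxOf_lt_length_iff.2 (List.getElem_mem hi)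
    have hk₂ : l₁.idxOf l₁[i] < l₂.length := hlen ▸ hk
    rw [show f l₁[i] = l₂[l₁.idxOf l₁[i]] from List.getD_eq_getElem _ _ hk₂]
    exact ((hpat _ _ _ _ _ _ (List.getElem?_eq_getElem hi) (List.getElem?_eq_getElem hk)
      (List.getElem?_eq_getElem _) (List.getElem?_eq_getElem hk₂)).1
      (List.getElem_idxOf hk).symm).symm
  refine ⟨f, ?_, List.ext_getElem (by rw [List.length_map, hlen]) fun i h₂ _ => ?_⟩
  · rintro _ hx _ hy hxy
    obtain ⟨i, hi, rfl⟩ := List.getElem_of_mem hx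
    obtain ⟨j, hj, rfl⟩ := List.getElem_of_mem hy
    rw [hf i hi, hf j hj] at hxy
    exact (hpat i j _ _ _ _ (List.getElem?_eq_getElem hi) (List.getElem?_eq_getElem hj)
      (List.getElem?_eq_getElem _) (List.getElem?_eq_getElem _)).2 hxy
  · rw [List.getElem_map, hf]

end ListPattern

theorem exists_injOn_mapsTo_extend {α β : Type*} [Nonempty β] {A₀ A : Set α} {B : Set β}
    {g : α → β} (hA₀ : A₀ ⊆ A) (hA : A.Finite) (hg : InjOn g A₀) (hgB : MapsTo g A₀ B)
    (hcard : A.encard ≤ B.encard) :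
    ∃ f : α → β, InjOn f A ∧ MapsTo f A B ∧ EqOn f g A₀ := by
  classical
  have hfresh : (A \ A₀).encard ≤ (B \ g '' A₀).encard := by
    have hA' := encard_sdiff_add_encard_of_subset hA₀
    have hB := encard_le_encard_sdiff_add_encard B (g '' A₀)
    rw [hg.encard_image] at hB
    exact WithTop.le_of_add_le_add_right (hA.subset hA₀).encard_lt_top.ne
      ((hA'.le.trans hcard).trans hB)
  obtain ⟨e, heB, he⟩ := hA.sdiff.exists_injOn_of_encard_le hfresh
  have hf₀ : EqOn (A₀.piecewise g e) g A₀ := piecewise_eqOn ..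
  have hf₁ : EqOn (A₀.piecewise g e) e (A \ A₀) :=
    (piecewise_eqOn_compl ..).mono fun _ hx => hx.2
  refine ⟨A₀.piecewise g e, ?_, ?_, hf₀⟩
  · rw [← union_sdiff_cancel hA₀, injOn_union disjoint_sdiff_right]
    refine ⟨hf₀.injOn_iff.2 hg, hf₁.injOn_iff.2 he, fun x hx y hy hxy => ?_⟩
    rw [hf₀ hx, hf₁ hy] at hxy
    exact (heB hy).2 (hxy ▸ mem_image_of_mem g hx)
  · have heB' : MapsTo e (A \ A₀) B := fun _ hx => (heB hx).1
    rw [← union_sdiff_cancel hA₀]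
    exact (hgB.congr hf₀.symm).union (heB'.congr hf₁.symm)

theorem encard_setOf_mem_le_length {α : Type*} (l : List α) :
    {x | x ∈ l}.encard ≤ l.length := by
  classical
  have : {x | x ∈ l} = (l.toFinset : Set α) := by ext; simp
  rw [this, encard_coe_eq_coe_finsetCard]
  exact_mod_cast l.toFinset_card_le

theorem natCast_card_le_encard {α : Type*} (s : Set α) : (Nat.card s : ℕ∞) ≤ s.encard := by
  rw [Nat.card_coe_set_eq, ncard_def]
  exact ENat.natCast_toNat_le_self _

section Holes

variable (α : ℕ)

theorem envholes_cons (τ : PTy) (Δ : List PTy) (v : Val) (δ : List Val) :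
    envholes α (τ :: Δ) (v :: δ) = holes α τ v ++ envholes α Δ δ := rfl

theorem envshell_cons (τ : PTy) (Δ : List PTy) (v : Val) (δ : List Val) :
    envshell (τ :: Δ) (v :: δ) = shell τ v :: envshell Δ δ := rfl

theorem length_holes_le_cnt : ∀ (τ : PTy) (v : Val), (holes α τ v).length ≤ cnt α τ
  | .unit, _ => by simp [holes]
  | .var n, _ => by by_cases h : n = α <;> simp [holes, cnt, h]
  | .sum a _, .vleft v => (length_holes_le_cnt a v).trans (le_max_left _ _)
  | .sum _ b, .vright v => (length_holes_le_cnt b v).trans (le_max_right _ _)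
  | .sum _ _, .sole | .sum _ _, .vpair _ _ => by simp [holes]
  | .prod a b, .vpair v w => by
    simpa only [holes, cnt, List.length_append] using
      add_le_add (length_holes_le_cnt a v) (length_holes_le_cnt b w)
  | .prod _ _, .sole | .prod _ _, .vleft _ | .prod _ _, .vright _ => by simp [holes]

theorem length_envholes_le_cntEnv :
    ∀ (Δ : List PTy) (δ : List Val), (envholes α Δ δ).length ≤ cntEnv α Δ
  | [], _ => by simp [envholes]
  | _ :: _, [] => by simp [envholes]
  | τ :: Δ, v :: δ => by
    rw [envholes_cons, List.length_append]
    exact add_le_add (length_holes_le_cnt α τ v) (length_envholes_le_cntEnv Δ δ)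

theorem length_holes_eq_of_shell_eq (τ : PTy) :
    ∀ v w : Val, shell τ v = shell τ w → (holes α τ v).length = (holes α τ w).length := by
  induction τ with
  | unit => simp [holes]
  | var n => intro v w _; by_cases h : n = α <;> simp [holes, h]
  | sum a b iha ihb =>
    rintro (_ | v | v | _) (_ | w | w | _) h <;> simp only [shell, reduceCtorEq] at h <;>
      simp only [holes, List.length_nil]
    exacts [iha v w (Shell.sleft.inj h), ihb v w (Shell.sright.inj h)]
  | prod a b iha ihb =>
    rintro (_ | _ | _ | ⟨v₁, v₂⟩) (_ | _ | _ | ⟨w₁, w₂⟩) h <;>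
      simp only [shell, reduceCtorEq, Shell.spair.injEq] at h <;>
      simp only [holes, List.length_nil, List.length_append]
    rw [iha v₁ w₁ h.1, ihb v₂ w₂ h.2]

theorem length_envholes_eq_of_envshell_eq :
    ∀ (Δ : List PTy) (δ₁ δ₂ : List Val), envshell Δ δ₁ = envshell Δ δ₂ →
      (envholes α Δ δ₁).length = (envholes α Δ δ₂).length
  | [], _, _, _ => by simp [envholes]
  | _ :: _, [], [], _ => rfl
  | _ :: _, [], _ :: _, h | _ :: _, _ :: _, [], h => by simp [envshell] at h
  | τ :: Δ, v₁ :: δ₁, v₂ :: δ₂, h => by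
    rw [envshell_cons, envshell_cons, List.cons.injEq] at h
    rw [envholes_cons, envholes_cons, List.length_append, List.length_append,
      length_holes_eq_of_shell_eq α τ v₁ v₂ h.1, length_envholes_eq_of_envshell_eq Δ δ₁ δ₂ h.2]

variable {α} {σ : ℕ → PTy}

theorem hasTy_of_mem_holes {τ : PTy} :
    ∀ {v h : Val}, HasTy v (psubst σ τ) → h ∈ holes α τ v → HasTy h (σ α) := by
  induction τ with
  | unit => simp [holes]
  | var n =>
    intro v h hv hh
    simp only [holes, List.mem_ite_nil_right, List.mem_singleton] at hh
    obtain ⟨rfl, rfl⟩ := hh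
    exact hv
  | sum a b iha ihb =>
    intro v h hv hh
    cases hv with
    | vleft hv => exact iha hv hh
    | vright hv => exact ihb hv hh
  | prod a b iha ihb =>
    intro v h hv hh
    cases hv with
    | vpair hv hw =>
      rcases List.mem_append.1 hh with hh | hh
      exacts [iha hv hh, ihb hw hh]

theorem hasTy_of_mem_envholes {Δ : List PTy} {δ : List Val} (hδ : EnvTy σ Δ δ) {h : Val}
    (hh : h ∈ envholes α Δ δ) : HasTy h (σ α) := by
  induction hδ with
  | nil => simp [envholes] at hh
  | cons hv _ ih =>
    rcases List.mem_append.1 hh with hh | hh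
    exacts [hasTy_of_mem_holes hv hh, ih hh]

end Holes

def mapHoles (f : ℕ → Val → Val) : PTy → Val → Val
  | .var n, v => f n v
  | .sum a _, .vleft v => .vleft (mapHoles f a v)
  | .sum _ b, .vright v => .vright (mapHoles f b v)
  | .prod a b, .vpair v w => .vpair (mapHoles f a v) (mapHoles f b w)
  | _, v => v

section MapHoles

variable (f : ℕ → Val → Val)

theorem shell_mapHoles (τ : PTy) : ∀ v : Val, shell τ (mapHoles f τ v) = shell τ v := by
  induction τ with
  | unit => intro v; cases v <;> rfl
  | var n => intro v; rfl
  | sum a b iha ihb => intro v; cases v <;> simp [mapHoles, shell, iha, ihb]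
  | prod a b iha ihb => intro v; cases v <;> simp [mapHoles, shell, iha, ihb]

theorem holes_mapHoles (α : ℕ) (τ : PTy) :
    ∀ v : Val, holes α τ (mapHoles f τ v) = (holes α τ v).map (f α) := by
  induction τ with
  | unit => intro v; cases v <;> rfl
  | var n => intro v; by_cases h : n = α <;> simp [mapHoles, holes, h]
  | sum a b iha ihb => intro v; cases v <;> simp [mapHoles, holes, iha, ihb]
  | prod a b iha ihb => intro v; cases v <;> simp [mapHoles, holes, iha, ihb]

theorem hasTy_mapHoles {σ₁ σ₂ : ℕ → PTy} {τ : PTy} :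
    ∀ {v : Val}, HasTy v (psubst σ₁ τ) →
      (∀ α h, h ∈ holes α τ v → HasTy (f α h) (σ₂ α)) → HasTy (mapHoles f τ v) (psubst σ₂ τ) := by
  induction τ with
  | unit => intro v hv _; cases hv; exact .sole
  | var n => intro v _ hf; exact hf n v (by simp [holes])
  | sum a b iha ihb =>
    intro v hv hf
    cases hv with
    | vleft hv => exact .vleft (iha hv hf)
    | vright hv => exact .vright (ihb hv hf)
  | prod a b iha ihb =>
    intro v hv hf
    cases hv with
    | vpair hv hw =>
      exact .vpair (iha hv fun α h hh => hf α h (List.mem_append_left _ hh))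
        (ihb hw fun α h hh => hf α h (List.mem_append_right _ hh))

end MapHoles

instance : Inhabited Val := ⟨.sole⟩

theorem exists_injOn_holes_extension {σ₂ : ℕ → PTy} {Δ : List PTy} {τ : PTy} {δ₁ δ₂ : List Val}
    {v₁ : Val} {α : ℕ} (ht₂ : EnvTy σ₂ Δ δ₂) (hshell : envshell Δ δ₁ = envshell Δ δ₂)
    (hpat : SameEqPattern (envholes α Δ δ₁) (envholes α Δ δ₂))
    (hsize : cnt α τ + cntEnv α Δ ≤ Nat.card {v : Val // HasTy v (σ₂ α)}) :
    ∃ f : Val → Val, InjOn f {x | x ∈ envholes α (τ :: Δ) (v₁ :: δ₁)} ∧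
      MapsTo f {x | x ∈ holes α τ v₁} {v | HasTy v (σ₂ α)} ∧
      envholes α Δ δ₂ = (envholes α Δ δ₁).map f := by
  obtain ⟨g, hg, hg₂⟩ :=
    hpat.exists_injOn_map_eq (length_envholes_eq_of_envshell_eq α Δ δ₁ δ₂ hshell)
  have hgB : MapsTo g {x | x ∈ envholes α Δ δ₁} {v | HasTy v (σ₂ α)} := fun x hx =>
    hasTy_of_mem_envholes ht₂ (hg₂ ▸ List.mem_map_of_mem hx)
  have hcard : {x | x ∈ envholes α (τ :: Δ) (v₁ :: δ₁)}.encard ≤ {v | HasTy v (σ₂ α)}.encard :=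
    calc _ ≤ ((envholes α (τ :: Δ) (v₁ :: δ₁)).length : ℕ∞) := encard_setOf_mem_le_length _
      _ ≤ ((cnt α τ + cntEnv α Δ : ℕ) : ℕ∞) := by
        rw [envholes_cons, List.length_append]
        exact_mod_cast add_le_add (length_holes_le_cnt α τ v₁) (length_envholes_le_cntEnv α Δ δ₁)
      _ ≤ Nat.card {v : Val // HasTy v (σ₂ α)} := by exact_mod_cast hsize
      _ ≤ _ := natCast_card_le_encard _
  obtain ⟨f, hf, hfB, hfg⟩ := exists_injOn_mapsTo_extend
    (fun x hx => List.mem_append_right _ hx) (List.finite_toSet _) hg hgB hcard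
  refine ⟨f, hf, hfB.mono_left fun x hx => List.mem_append_left _ hx, ?_⟩
  rw [hg₂]
  exact List.map_congr_left fun x hx => (hfg hx).symm

theorem stmt_9_general (σ₁ σ₂ : ℕ → PTy) (Δ : List PTy) (τ : PTy) (δ₁ δ₂ : List Val) (v₁ : Val)
    (ht₂ : EnvTy σ₂ Δ δ₂)
    (hv₁ : HasTy v₁ (psubst σ₁ τ))
    (hp : EqPat Δ δ₁ δ₂)
    (hsize : ∀ α : ℕ, cnt α τ + cntEnv α Δ ≤ Nat.card {v : Val // HasTy v (σ₂ α)}) :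
    ∃ v₂ : Val, HasTy v₂ (psubst σ₂ τ) ∧ EqPat (τ :: Δ) (v₁ :: δ₁) (v₂ :: δ₂) := by
  choose F hinj hmaps hmap using fun α =>
    exists_injOn_holes_extension (v₁ := v₁) ht₂ hp.1 (hp.2 α) (hsize α)
  refine ⟨mapHoles F τ v₁, hasTy_mapHoles F hv₁ fun α _ hh => hmaps α hh, ?_, fun α => ?_⟩
  · rw [envshell_cons, envshell_cons, shell_mapHoles, hp.1]
  · have hholes : envholes α (τ :: Δ) (mapHoles F τ v₁ :: δ₂)
        = (envholes α (τ :: Δ) (v₁ :: δ₁)).map (F α) := by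
      rw [envholes_cons, envholes_cons, holes_mapHoles, hmap α, List.map_append]
    rw [hholes]
    exact sameEqPattern_map (hinj α)

/-- Equality-pattern extension: if δ₁ ⇌_Δ δ₂ and σ₂ gives every type variable α at
least as many values as the number of α-occurrences in Δ, x:τ, then any value v₁
of type σ₁(τ) can be matched by some v₂ of type σ₂(τ) extending the pattern. -/
theorem stmt_9 (σ₁ σ₂ : ℕ → PTy) (Δ : List PTy) (τ : PTy) (δ₁ δ₂ : List Val) (v₁ : Val)
    (ht₁ : EnvTy σ₁ Δ δ₁) (ht₂ : EnvTy σ₂ Δ δ₂)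
    (hv₁ : HasTy v₁ (psubst σ₁ τ))
    (hp : EqPat Δ δ₁ δ₂)
    (hsize : ∀ α : ℕ, cnt α τ + cntEnv α Δ ≤ Nat.card {v : Val // HasTy v (σ₂ α)}) :
    ∃ v₂ : Val, HasTy v₂ (psubst σ₂ τ) ∧ EqPat (τ :: Δ) (v₁ :: δ₁) (v₂ :: δ₂) :=
  stmt_9_general σ₁ σ₂ Δ τ δ₁ δ₂ v₁ ht₂ hv₁ hp hsize
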